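/- The paraparticle realization map preserves anticommutators of odd elements: for all complex matrices B, B' ∈ M_{m×n}(ℂ) and C, C' ∈ M_{n×m}(ℂ), one has {J₁(B,C), J₁(B',C')} = J₀(BC' + B'C, CB' + C'B) in the algebra 𝒜. -/

import Mathlib

/-!
`J₁(B, C) = J₁(B, 0) + J₁(0, C)`, and the anticommutator is bilinear, so it suffices to
anticommute the generators `{b_k^+, f_α^-}` and `{f_β^+, b_l^-}`. The graded Jacobi identity
`{x, {y, z}} = {{x, y}, z} + [[x, z], y]` reduces each such product to the trilinear relations:
two generators of the same kind anticommute, while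
`{{b_k^+, f_α^-}, {f_β^+, b_l^-}} = 2 δ_αβ {b_k^+, b_l^-} + 2 δ_kl [f_β^+, f_α^-]`.
Summed against the matrix entries, the mixed products give `J₀(BC', C'B)` and `J₀(B'C, CB')`.
-/

/-- The commutator `[x, y] = x*y - y*x`. -/
def pbComm {A : Type*} [Ring A] (x y : A) : A := x * y - y * x

/-- The anticommutator `{x, y} = x*y + y*x`. -/
def pbAComm {A : Type*} [Ring A] (x y : A) : A := x * y + y * x

/-- Kronecker delta with values in `ℂ`. -/
def kd {I : Type*} [DecidableEq I] (i j : I) : ℂ := if i = j then 1 else 0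

/-- A sign, i.e. `+1` or `-1`, regarded as an integer. -/
def IsSign (x : ℤ) : Prop := x = 1 ∨ x = -1

/-- The defining trilinear relations of the relative parabose set `P_BF`,
for a family `b` of parabosonic and `f` of parafermionic generators. -/
structure PBFRelations {A : Type*} [Ring A] [Algebra ℂ A]
    {I J : Type*} [DecidableEq I] [DecidableEq J]
    (b : I → ℤ → A) (f : J → ℤ → A) : Prop where
  rel_bbb : ∀ (i j k : I) (ξ η ε : ℤ), IsSign ξ → IsSign η → IsSign ε →
    pbComm (pbAComm (b i ξ) (b j η)) (b k ε)
      = (((ε - η : ℤ) : ℂ) * kd j k) • b i ξ + (((ε - ξ : ℤ) : ℂ) * kd i k) • b j η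
  rel_fff : ∀ (α β γ : J) (ξ η ε : ℤ), IsSign ξ → IsSign η → IsSign ε →
    pbComm (pbComm (f α ξ) (f β η)) (f γ ε)
      = ((((ε - η) ^ 2 : ℤ) : ℂ) / 2 * kd β γ) • f α ξ
        - ((((ε - ξ) ^ 2 : ℤ) : ℂ) / 2 * kd α γ) • f β η
  rel_bbf : ∀ (i j : I) (α : J) (ξ η ε : ℤ), IsSign ξ → IsSign η → IsSign ε →
    pbComm (pbAComm (b i ξ) (b j η)) (f α ε) = 0
  rel_ffb : ∀ (α β : J) (i : I) (ξ η ε : ℤ), IsSign ξ → IsSign η → IsSign ε →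
    pbComm (pbComm (f α ξ) (f β η)) (b i ε) = 0
  rel_fbb : ∀ (α : J) (i j : I) (ξ η ε : ℤ), IsSign ξ → IsSign η → IsSign ε →
    pbComm (pbAComm (f α ξ) (b i η)) (b j ε) = (((ε - η : ℤ) : ℂ) * kd i j) • f α ξ
  rel_bff : ∀ (i : I) (α β : J) (ξ η ε : ℤ), IsSign ξ → IsSign η → IsSign ε →
    pbAComm (pbAComm (b i ξ) (f α η)) (f β ε) = ((((ε - η) ^ 2 : ℤ) : ℂ) / 2 * kd α β) • b i ξ


open scoped BigOperators

/-- The even part of the paraparticle realization map: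
`J₀(A,D) = ½ Σ A_{kl} {b_k^+, b_l^-} + ½ Σ D_{αβ} [f_α^+, f_β^-]`. -/
noncomputable def J0 {𝒜 : Type*} [Ring 𝒜] [Algebra ℂ 𝒜] {m n : ℕ}
    (b : Fin m → ℤ → 𝒜) (f : Fin n → ℤ → 𝒜)
    (A : Matrix (Fin m) (Fin m) ℂ) (D : Matrix (Fin n) (Fin n) ℂ) : 𝒜 :=
  (1 / 2 : ℂ) • (∑ k, ∑ l, A k l • pbAComm (b k 1) (b l (-1)))
    + (1 / 2 : ℂ) • (∑ α, ∑ β, D α β • pbComm (f α 1) (f β (-1)))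

/-- The odd part of the paraparticle realization map:
`J₁(B,C) = ½ Σ ( B_{kα} {b_k^+, f_α^-} + C_{αk} {f_α^+, b_k^-} )`. -/
noncomputable def J1 {𝒜 : Type*} [Ring 𝒜] [Algebra ℂ 𝒜] {m n : ℕ}
    (b : Fin m → ℤ → 𝒜) (f : Fin n → ℤ → 𝒜)
    (B : Matrix (Fin m) (Fin n) ℂ) (C : Matrix (Fin n) (Fin m) ℂ) : 𝒜 :=
  (1 / 2 : ℂ) • (∑ k, ∑ α, (B k α • pbAComm (b k 1) (f α (-1)) + C α k • pbAComm (f α 1) (b k (-1))))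

section Anticommutator

variable {R A : Type*} [CommSemiring R] [Ring A] [Algebra R A]

theorem pbAComm_comm (x y : A) : pbAComm x y = pbAComm y x :=
  add_comm _ _

theorem pbComm_antisymm (x y : A) : pbComm x y = -pbComm y x := by
  simp only [pbComm, neg_sub]

theorem pbAComm_add_left (x x' y : A) : pbAComm (x + x') y = pbAComm x y + pbAComm x' y := by
  simp only [pbAComm, add_mul, mul_add]; abel

theorem pbAComm_add_right (x y y' : A) : pbAComm x (y + y') = pbAComm x y + pbAComm x y' := by
  rw [pbAComm_comm, pbAComm_add_left, pbAComm_comm y, pbAComm_comm y']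

theorem pbAComm_sum_left {ι : Type*} (s : Finset ι) (g : ι → A) (y : A) :
    pbAComm (∑ i ∈ s, g i) y = ∑ i ∈ s, pbAComm (g i) y := by
  simp only [pbAComm, Finset.sum_mul, Finset.mul_sum, Finset.sum_add_distrib]

theorem pbAComm_sum_right {ι : Type*} (s : Finset ι) (x : A) (g : ι → A) :
    pbAComm x (∑ i ∈ s, g i) = ∑ i ∈ s, pbAComm x (g i) := by
  simp only [pbAComm, Finset.sum_mul, Finset.mul_sum, Finset.sum_add_distrib]

theorem pbAComm_smul_left (c : R) (x y : A) : pbAComm (c • x) y = c • pbAComm x y := by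
  simp only [pbAComm, smul_add, smul_mul_assoc, mul_smul_comm]

theorem pbAComm_smul_right (c : R) (x y : A) : pbAComm x (c • y) = c • pbAComm x y := by
  simp only [pbAComm, smul_add, smul_mul_assoc, mul_smul_comm]

theorem pbComm_smul_left (c : R) (x y : A) : pbComm (c • x) y = c • pbComm x y := by
  simp only [pbComm, smul_sub, smul_mul_assoc, mul_smul_comm]

theorem pbAComm_pbAComm (x y z : A) :
    pbAComm x (pbAComm y z) = pbAComm (pbAComm x y) z + pbComm (pbComm x z) y := by
  simp only [pbAComm, pbComm]; noncomm_ring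

end Anticommutator

theorem isSign_one : IsSign 1 := Or.inl rfl

theorem isSign_neg_one : IsSign (-1) := Or.inr rfl

section RealizationMap

variable {𝒜 : Type*} [Ring 𝒜] [Algebra ℂ 𝒜] {m n : ℕ} (b : Fin m → ℤ → 𝒜) (f : Fin n → ℤ → 𝒜)

theorem J0_add (A A' : Matrix (Fin m) (Fin m) ℂ) (D D' : Matrix (Fin n) (Fin n) ℂ) :
    J0 b f (A + A') (D + D') = J0 b f A D + J0 b f A' D' := by
  simp only [J0, Matrix.add_apply, add_smul, Finset.sum_add_distrib, smul_add]
  abel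

theorem J1_eq_add (B : Matrix (Fin m) (Fin n) ℂ) (C : Matrix (Fin n) (Fin m) ℂ) :
    J1 b f B C = J1 b f B 0 + J1 b f 0 C := by
  simp only [J1, Matrix.zero_apply, zero_smul, add_zero, zero_add, Finset.sum_add_distrib,
    smul_add]

theorem J1_zero_right (B : Matrix (Fin m) (Fin n) ℂ) :
    J1 b f B 0 = (1 / 2 : ℂ) • ∑ k, ∑ α, B k α • pbAComm (b k 1) (f α (-1)) := by
  simp only [J1, Matrix.zero_apply, zero_smul, add_zero]

theorem J1_zero_left (C : Matrix (Fin n) (Fin m) ℂ) :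
    J1 b f 0 C = (1 / 2 : ℂ) • ∑ k, ∑ α, C α k • pbAComm (f α 1) (b k (-1)) := by
  simp only [J1, Matrix.zero_apply, zero_smul, zero_add]

end RealizationMap

namespace PBFRelations

variable {A I J : Type*} [Ring A] [Algebra ℂ A] [DecidableEq I] [DecidableEq J]
  {b : I → ℤ → A} {f : J → ℤ → A}

theorem pbAComm_acomm_bf_acomm_bf (h : PBFRelations b f) (k l : I) (α β : J) :
    pbAComm (pbAComm (b k 1) (f α (-1))) (pbAComm (b l 1) (f β (-1))) = 0 := by
  have hf : pbAComm (pbAComm (b k 1) (f α (-1))) (f β (-1)) = 0 := by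
    simpa using h.rel_bff k α β 1 (-1) (-1) isSign_one isSign_neg_one isSign_neg_one
  have hb : pbComm (pbAComm (b k 1) (f α (-1))) (b l 1) = 0 := by
    rw [pbAComm_comm]
    simpa using h.rel_fbb α k l (-1) 1 1 isSign_neg_one isSign_one isSign_one
  rw [pbAComm_comm (b l 1), pbAComm_pbAComm, hf, hb]
  simp only [pbAComm, pbComm, zero_mul, mul_zero, sub_self, add_zero]

theorem pbAComm_acomm_fb_acomm_fb (h : PBFRelations b f) (k l : I) (α β : J) :
    pbAComm (pbAComm (f α 1) (b k (-1))) (pbAComm (f β 1) (b l (-1))) = 0 := by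
  have hf : pbAComm (pbAComm (f α 1) (b k (-1))) (f β 1) = 0 := by
    rw [pbAComm_comm (f α 1)]
    simpa using h.rel_bff k α β (-1) 1 1 isSign_neg_one isSign_one isSign_one
  have hb : pbComm (pbAComm (f α 1) (b k (-1))) (b l (-1)) = 0 := by
    simpa using h.rel_fbb α k l 1 (-1) (-1) isSign_one isSign_neg_one isSign_neg_one
  rw [pbAComm_pbAComm, hf, hb]
  simp only [pbAComm, pbComm, zero_mul, mul_zero, sub_self, add_zero]

theorem pbAComm_acomm_bf_acomm_fb (h : PBFRelations b f) (k l : I) (α β : J) :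
    pbAComm (pbAComm (b k 1) (f α (-1))) (pbAComm (f β 1) (b l (-1)))
      = (2 * kd α β) • pbAComm (b k 1) (b l (-1)) + (2 * kd k l) • pbComm (f β 1) (f α (-1)) := by
  have hf : pbAComm (pbAComm (b k 1) (f α (-1))) (f β 1) = (2 * kd α β) • b k 1 := by
    rw [h.rel_bff k α β 1 (-1) 1 isSign_one isSign_neg_one isSign_one]; norm_num
  have hb : pbComm (pbAComm (b k 1) (f α (-1))) (b l (-1)) = -((2 * kd k l) • f α (-1)) := by
    rw [pbAComm_comm, h.rel_fbb α k l (-1) 1 (-1) isSign_neg_one isSign_one isSign_neg_one,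
      ← neg_smul]
    norm_num
  rw [pbAComm_pbAComm, hf, hb, pbAComm_smul_left, ← neg_smul, pbComm_smul_left,
    pbComm_antisymm (f α (-1)), smul_neg, neg_smul, neg_neg]

section RealizationMap

variable {𝒜 : Type*} [Ring 𝒜] [Algebra ℂ 𝒜] {m n : ℕ} {b : Fin m → ℤ → 𝒜} {f : Fin n → ℤ → 𝒜}

theorem pbAComm_acomm_bf_J1_zero_left (h : PBFRelations b f) (C : Matrix (Fin n) (Fin m) ℂ)
    (k : Fin m) (α : Fin n) :
    pbAComm (pbAComm (b k 1) (f α (-1))) (J1 b f 0 C)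
      = ∑ l, C α l • pbAComm (b k 1) (b l (-1)) + ∑ β, C β k • pbComm (f β 1) (f α (-1)) := by
  have half : ∀ c : ℂ, 1 / 2 * c * 2 = c := fun c => by ring
  simp only [J1_zero_left, pbAComm_smul_right, pbAComm_sum_right, h.pbAComm_acomm_bf_acomm_fb,
    kd, smul_add, smul_smul, Finset.sum_add_distrib, mul_ite, ite_smul, zero_smul, Finset.smul_sum,
    mul_zero, smul_ite, smul_zero, Finset.sum_ite_eq, Finset.sum_ite_irrel, Finset.mem_univ,
    if_true, Finset.sum_const_zero, mul_one, half]

theorem pbAComm_J1_zero_right_J1_zero_right (h : PBFRelations b f)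
    (B B' : Matrix (Fin m) (Fin n) ℂ) :
    pbAComm (J1 b f B 0) (J1 b f B' 0) = 0 := by
  simp only [J1_zero_right, pbAComm_smul_left, pbAComm_smul_right, pbAComm_sum_left,
    pbAComm_sum_right, h.pbAComm_acomm_bf_acomm_bf, smul_zero, Finset.sum_const_zero]

theorem pbAComm_J1_zero_left_J1_zero_left (h : PBFRelations b f)
    (C C' : Matrix (Fin n) (Fin m) ℂ) :
    pbAComm (J1 b f 0 C) (J1 b f 0 C') = 0 := by
  simp only [J1_zero_left, pbAComm_smul_left, pbAComm_smul_right, pbAComm_sum_left,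
    pbAComm_sum_right, h.pbAComm_acomm_fb_acomm_fb, smul_zero, Finset.sum_const_zero]

theorem pbAComm_J1_zero_right_J1_zero_left (h : PBFRelations b f) (B : Matrix (Fin m) (Fin n) ℂ)
    (C : Matrix (Fin n) (Fin m) ℂ) :
    pbAComm (J1 b f B 0) (J1 b f 0 C) = J0 b f (B * C) (C * B) := by
  rw [J1_zero_right]
  simp only [J0, pbAComm_smul_left, pbAComm_sum_left, h.pbAComm_acomm_bf_J1_zero_left,
    Matrix.mul_apply, Finset.sum_smul, smul_add, Finset.smul_sum, smul_smul,
    Finset.sum_add_distrib, mul_assoc]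
  congr 1
  · exact Finset.sum_congr rfl fun _ _ => Finset.sum_comm
  · rw [Finset.sum_comm_cycle]
    refine Finset.sum_congr rfl fun _ _ => Finset.sum_comm.trans ?_
    simp only [mul_comm (B _ _)]

end RealizationMap

end PBFRelations

theorem J1_acomm_J1_general {𝒜 : Type*} [Ring 𝒜] [Algebra ℂ 𝒜] {m n : ℕ}
    (b : Fin m → ℤ → 𝒜) (f : Fin n → ℤ → 𝒜) (h : PBFRelations b f)
    (B B' : Matrix (Fin m) (Fin n) ℂ) (C C' : Matrix (Fin n) (Fin m) ℂ) :
    pbAComm (J1 b f B C) (J1 b f B' C') = J0 b f (B * C' + B' * C) (C * B' + C' * B) := by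
  calc pbAComm (J1 b f B C) (J1 b f B' C')
      = pbAComm (J1 b f B 0) (J1 b f 0 C') + pbAComm (J1 b f B' 0) (J1 b f 0 C) := by
        rw [J1_eq_add b f B C, J1_eq_add b f B' C']
        simp only [pbAComm_add_left, pbAComm_add_right, h.pbAComm_J1_zero_right_J1_zero_right,
          h.pbAComm_J1_zero_left_J1_zero_left, pbAComm_comm (J1 b f 0 C), zero_add, add_zero]
        exact add_comm _ _
    _ = J0 b f (B * C' + B' * C) (C * B' + C' * B) := by
        rw [h.pbAComm_J1_zero_right_J1_zero_left, h.pbAComm_J1_zero_right_J1_zero_left, ← J0_add,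
          add_comm (C' * B)]

/-- The paraparticle realization map preserves anticommutators of odd elements. -/
theorem J1_acomm_J1 {𝒜 : Type*} [Ring 𝒜] [Algebra ℂ 𝒜] {m n : ℕ}
    (hm : 0 < m) (hn : 0 < n)
    (b : Fin m → ℤ → 𝒜) (f : Fin n → ℤ → 𝒜) (h : PBFRelations b f)
    (B B' : Matrix (Fin m) (Fin n) ℂ) (C C' : Matrix (Fin n) (Fin m) ℂ) :
    pbAComm (J1 b f B C) (J1 b f B' C') = J0 b f (B * C' + B' * C) (C * B' + C' * B) :=
  J1_acomm_J1_general b f h B B' C C'
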